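/- Let g be a discrete-time Markov transition kernel on a σ-compact metric state space X with stationary distribution π, and for every Borel set S with π(S) > 0 let t̄_m^{(S)} denote the standardized mixing time of the trace kernel g^{(S)}. Then t̄_m ≤ sup{t̄_m^{(S)} : S compact Borel subset of X with π(S) > 0}. -/

import Mathlib

open MeasureTheory ENNReal

noncomputable section

namespace MixHit

variable {X : Type*} [MeasurableSpace X]

/-- Total variation distance between two Borel measures. -/
def tv (μ ν : Measure X) : ℝ≥0∞ :=
  ⨆ (A : Set X) (_ : MeasurableSet A), (μ A - ν A) ⊔ (ν A - μ A)

/-- `g` is a Markov transition kernel: each `g x` is a (Borel) probability measure,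
measurably in `x`. -/
def IsMarkov (g : X → Measure X) : Prop :=
  (∀ x, IsProbabilityMeasure (g x)) ∧
    ∀ A : Set X, MeasurableSet A → Measurable fun x => g x A

/-- `t`-step transition probabilities (`iterK g 0 x = δ_x`). -/
def iterK (g : X → Measure X) : ℕ → X → Measure X
  | 0 => fun x => Measure.dirac x
  | n + 1 => fun x => (g x).bind (iterK g n)

/-- `π` is a stationary distribution for `g`. -/
def Stationary (g : X → Measure X) (π : Measure X) : Prop :=
  ∀ A : Set X, MeasurableSet A → ∫⁻ x, g x A ∂π = π A

/-- `g` is reversible with respect to `π`. -/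
def Reversible (g : X → Measure X) (π : Measure X) : Prop :=
  ∀ A B : Set X, MeasurableSet A → MeasurableSet B →
    ∫⁻ x in A, g x B ∂π = ∫⁻ x in B, g x A ∂π

/-- The lazy kernel `g_L(x,·) = (1/2) g(x,·) + (1/2) δ_x`. -/
def lazy (g : X → Measure X) : X → Measure X := fun x =>
  (2 : ℝ≥0∞)⁻¹ • g x + (2 : ℝ≥0∞)⁻¹ • Measure.dirac x

/-- Mixing time `min {t : sup_x ‖g^t(x,·) − π‖ ≤ ε}`, as an element of `ℝ≥0∞`
(`⊤` if there is no such `t`). -/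
def mixTime (g : X → Measure X) (π : Measure X) (ε : ℝ≥0∞) : ℝ≥0∞ :=
  ⨅ (t : ℕ) (_ : ∀ x, tv (iterK g t x) π ≤ ε), (t : ℝ≥0∞)

/-- `d̄(t) = sup_{x,y} ‖g^t(x,·) − g^t(y,·)‖`. -/
def dbar (g : X → Measure X) (t : ℕ) : ℝ≥0∞ :=
  ⨆ (x : X) (y : X), tv (iterK g t x) (iterK g t y)

/-- Standardized mixing time `min {t : d̄(t) ≤ ε}` (`⊤` if there is no such `t`). -/
def stdMix (g : X → Measure X) (ε : ℝ≥0∞) : ℝ≥0∞ :=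
  ⨅ (t : ℕ) (_ : dbar g t ≤ ε), (t : ℝ≥0∞)

/-- `P_x(τ_A = t)` for the chain with kernel `g` started at `x`, where
`τ_A = min {t : X_t ∈ A}` (first-step recursion). -/
def hitEq (g : X → Measure X) (A : Set X) : ℕ → X → ℝ≥0∞
  | 0 => fun x => A.indicator (fun _ => 1) x
  | n + 1 => fun x => Aᶜ.indicator (fun x' => ∫⁻ y, hitEq g A n y ∂(g x')) x

/-- `P_x(τ_A ≤ t)`. -/
def hitLE (g : X → Measure X) (A : Set X) (t : ℕ) (x : X) : ℝ≥0∞ :=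
  ∑ s ∈ Finset.range (t + 1), hitEq g A s x

/-- `E_x[τ_A] = ∑_{t ≥ 0} P_x(τ_A > t)`. -/
def expHit (g : X → Measure X) (A : Set X) (x : X) : ℝ≥0∞ :=
  ∑' t : ℕ, (1 - hitLE g A t x)

/-- Maximum hitting time `t_H(α) = sup {E_x[τ_A] : x ∈ X, A Borel, π(A) ≥ α}`. -/
def maxHit (g : X → Measure X) (π : Measure X) (α : ℝ) : ℝ≥0∞ :=
  ⨆ (x : X) (A : Set X) (_ : MeasurableSet A) (_ : ENNReal.ofReal α ≤ π A),
    expHit g A x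

/-- Large hitting time
`τ_g(α) = min {t : inf {P_x(τ_A ≤ t) : x ∈ X, A Borel, π(A) ≥ α} > 0.9}`. -/
def largeHit (g : X → Measure X) (π : Measure X) (α : ℝ) : ℝ≥0∞ :=
  ⨅ (t : ℕ) (_ : (9 / 10 : ℝ≥0∞) <
      ⨅ (x : X) (A : Set X) (_ : MeasurableSet A) (_ : ENNReal.ofReal α ≤ π A),
        hitLE g A t x),
    (t : ℝ≥0∞)

/-- The strong Feller property: continuity of `x ↦ g(x,·)` in total variation. -/
def StrongFeller [PseudoMetricSpace X] (g : X → Measure X) : Prop :=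
  ∀ x : X, ∀ ε : ℝ, 0 < ε → ∃ δ : ℝ, 0 < δ ∧
    ∀ y : X, dist y x < δ → tv (g x) (g y) < ENNReal.ofReal ε

/-- Law of `X_t` on the event that `t` is the first time the chain lies in `S`. -/
def enterDist (g : X → Measure X) (S : Set X) : ℕ → X → Measure X
  | 0 => fun x => (Measure.dirac x).restrict S
  | n + 1 => fun x => Sᶜ.indicator (fun x' => (g x').bind (enterDist g S n)) x

/-- Law of the chain's position at its first entrance (at a time `≥ 0`) into `S`. -/
def hitMeasure (g : X → Measure X) (S : Set X) (x : X) : Measure X :=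
  Measure.sum fun t => enterDist g S t x

/-- One step of the trace of `g` on `S`: take one `g`-step, then run until the
first entrance into `S`. -/
def traceK (g : X → Measure X) (S : Set X) : X → Measure X :=
  fun x => (g x).bind (hitMeasure g S)

/-- The trace of `g` on `S`, viewed as a kernel on the subtype `S`. -/
def traceSub (g : X → Measure X) (S : Set X) : S → Measure S :=
  fun x => (traceK g S (x : X)).comap (Subtype.val)

/-- Normalization of `π` to `S`, as a measure on the subtype `S`. -/
def normSub (π : Measure X) (S : Set X) : Measure S :=
  (π S)⁻¹ • π.comap (Subtype.val : S → X)

/-- Ergodicity: from every starting point, the chain converges to `π`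
in total variation. -/
def ErgodicK (g : X → Measure X) (π : Measure X) : Prop :=
  Stationary g π ∧
    ∀ x : X, Filter.Tendsto (fun t => tv (iterK g t x) π) Filter.atTop (nhds 0)

/-!
Fix `n` with `d̄(t) > ε` for all `t ≤ n`, and for each such `t` points `x, y` and a set `A`
witnessing it with some margin. By σ-compactness there is a compact `S` containing all these
points such that the chains started at them stay in `S` up to time `n`, except with probability
smaller than the margins. A path that stays in `S` is also a path of the trace chain on `S`, so
comparing both chains with the chain killed on leaving `S` shows that the same `x, y, A` witness
`d̄^{(S)}(t) > ε`. Hence the trace on `S` has not mixed before time `n + 1` either.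
-/

open Set Filter

section Kernels

variable {Y : Type*} [MeasurableSpace Y]

lemma IsMarkov.measurable {g : X → Measure X} (hg : IsMarkov g) : Measurable g :=
  Measure.measurable_of_measurable_coe _ hg.2

lemma measurable_iterK {k : X → Measure X} (hk : Measurable k) (t : ℕ) :
    Measurable (iterK k t) := by
  induction t with
  | zero => exact Measure.measurable_dirac
  | succ n ih => exact (Measure.measurable_bind' ih).comp hk

lemma iterK_succ' {k : X → Measure X} (hk : Measurable k) (t : ℕ) (x : X) :
    iterK k (t + 1) x = (iterK k t x).bind k := by
  induction t generalizing x with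
  | zero => exact Measure.bind_dirac.trans (Measure.dirac_bind hk x).symm
  | succ n ih =>
    calc iterK k (n + 2) x = (k x).bind fun y => (iterK k n y).bind k := congrArg _ (funext ih)
      _ = ((k x).bind (iterK k n)).bind k :=
        (Measure.bind_bind (measurable_iterK hk n).aemeasurable hk.aemeasurable).symm

lemma isProbabilityMeasure_iterK {g : X → Measure X} (hg : IsMarkov g) (t : ℕ) (x : X) :
    IsProbabilityMeasure (iterK g t x) := by
  induction t generalizing x with
  | zero => exact Measure.dirac.isProbabilityMeasure
  | succ n ih =>
    refine ⟨?_⟩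
    show (g x).bind (iterK g n) univ = 1
    rw [Measure.bind_apply .univ (measurable_iterK hg.measurable n).aemeasurable]
    simp [(hg.1 x).measure_univ]

lemma iterK_apply_univ_le_one {k : Y → Measure Y} (hk : Measurable k)
    (hk_le : ∀ y, k y univ ≤ 1) (t : ℕ) (y : Y) : iterK k t y univ ≤ 1 := by
  induction t generalizing y with
  | zero => simp [iterK]
  | succ n ih =>
    show (k y).bind (iterK k n) univ ≤ 1
    rw [Measure.bind_apply .univ (measurable_iterK hk n).aemeasurable]
    calc ∫⁻ z, iterK k n z univ ∂(k y) ≤ ∫⁻ _, 1 ∂(k y) := lintegral_mono ih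
      _ ≤ 1 := by simpa using hk_le y

lemma iterK_le_map_iterK {k : X → Measure X} {k' : Y → Measure Y} (hk : Measurable k)
    (hk' : Measurable k') {f : Y → X} (hf : Measurable f) (h : ∀ y, k (f y) ≤ (k' y).map f)
    (t : ℕ) (y : Y) : iterK k t (f y) ≤ (iterK k' t y).map f := by
  induction t generalizing y with
  | zero => simp [iterK, Measure.map_dirac' hf]
  | succ n ih =>
    refine Measure.le_iff.2 fun A hA => ?_
    have hkn := measurable_iterK hk n
    show (k (f y)).bind (iterK k n) A ≤ ((k' y).bind (iterK k' n)).map f A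
    rw [Measure.map_apply hf hA, Measure.bind_apply hA hkn.aemeasurable,
      Measure.bind_apply (hf hA) (measurable_iterK hk' n).aemeasurable]
    calc ∫⁻ z, iterK k n z A ∂k (f y) ≤ ∫⁻ z, iterK k n z A ∂(k' y).map f :=
          lintegral_mono' (h y) le_rfl
      _ = ∫⁻ u, iterK k n (f u) A ∂k' y :=
          lintegral_map ((Measure.measurable_coe hA).comp hkn) hf
      _ ≤ ∫⁻ u, iterK k' n u (f ⁻¹' A) ∂k' y :=
          lintegral_mono fun u => (ih u A).trans_eq (Measure.map_apply hf hA)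

lemma iterK_mono {k k' : X → Measure X} (hk : Measurable k) (hk' : Measurable k')
    (h : ∀ x, k x ≤ k' x) (t : ℕ) (x : X) : iterK k t x ≤ iterK k' t x := by
  simpa using iterK_le_map_iterK hk hk' measurable_id (by simpa using h) t x

end Kernels

lemma apply_le_add_of_le_of_univ_le {ρ μ : Measure X} [IsFiniteMeasure μ] (hρμ : ρ ≤ μ)
    {c : ℝ≥0∞} (hc : μ univ ≤ ρ univ + c) {A : Set X} (hA : MeasurableSet A) :
    μ A ≤ ρ A + c := by
  refine (ENNReal.add_le_add_iff_right (measure_ne_top μ Aᶜ)).1 ?_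
  calc μ A + μ Aᶜ = μ univ := measure_add_measure_compl hA
    _ ≤ ρ A + ρ Aᶜ + c := by rwa [measure_add_measure_compl hA]
    _ ≤ ρ A + μ Aᶜ + c := by gcongr
    _ = ρ A + c + μ Aᶜ := add_right_comm _ _ _

section MixingTime

variable {k : X → Measure X} {ε : ℝ≥0∞}

lemma sub_le_tv (μ ν : Measure X) {A : Set X} (hA : MeasurableSet A) : μ A - ν A ≤ tv μ ν :=
  le_iSup₂_of_le A hA le_sup_left

lemma tv_iterK_le_dbar (t : ℕ) (x y : X) : tv (iterK k t x) (iterK k t y) ≤ dbar k t :=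
  le_iSup₂_of_le x y le_rfl

lemma exists_lt_of_lt_dbar {t : ℕ} (h : ε < dbar k t) :
    ∃ x y : X, ∃ A : Set X, MeasurableSet A ∧ iterK k t y A + ε < iterK k t x A := by
  obtain ⟨x, y, hxy⟩ : ∃ x y, ε < tv (iterK k t x) (iterK k t y) := by
    simpa only [dbar, lt_iSup_iff] using h
  obtain ⟨A, hA, hlt⟩ : ∃ A, MeasurableSet A ∧
      ε < (iterK k t x A - iterK k t y A) ⊔ (iterK k t y A - iterK k t x A) := by
    simpa only [tv, lt_iSup_iff, exists_prop] using hxy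
  rcases lt_sup_iff.1 hlt with h' | h'
  · exact ⟨x, y, A, hA, lt_tsub_iff_left.1 h'⟩
  · exact ⟨y, x, A, hA, lt_tsub_iff_left.1 h'⟩

lemma stdMix_le {t : ℕ} (h : dbar k t ≤ ε) : stdMix k ε ≤ t :=
  iInf₂_le t h

lemma add_one_le_stdMix {n : ℕ} (h : ∀ t ≤ n, ε < dbar k t) :
    ((n + 1 : ℕ) : ℝ≥0∞) ≤ stdMix k ε :=
  le_iInf₂ fun t ht => Nat.cast_le.2 <| by
    by_contra! hlt
    exact (h t (Nat.lt_succ_iff.1 hlt)).not_ge ht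

lemma stdMix_le_of_forall {b : ℝ≥0∞}
    (h : ∀ n : ℕ, (∀ t ≤ n, ε < dbar k t) → ((n + 1 : ℕ) : ℝ≥0∞) ≤ b) :
    stdMix k ε ≤ b := by
  classical
  by_cases hex : ∃ t, dbar k t ≤ ε
  · refine (stdMix_le (Nat.find_spec hex)).trans ?_
    cases hN : Nat.find hex with
    | zero => simp
    | succ n =>
      exact h n fun t ht => lt_of_not_ge (Nat.find_min hex (by omega))
  · push Not at hex
    have hb : b = ⊤ := by
      by_contra hb
      obtain ⟨n, hn⟩ := ENNReal.exists_nat_gt hb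
      exact (h n fun t _ => hex t).not_gt (hn.trans_le (by exact_mod_cast n.le_succ))
    simp [hb]

end MixingTime

section Trace

variable {g : X → Measure X} {S : Set X}

def killed (g : X → Measure X) (S : Set X) : X → Measure X :=
  fun x => (g x).restrict S

lemma enterDist_zero_apply (hS : MeasurableSet S) (x : X) {A : Set X} (hA : MeasurableSet A) :
    enterDist g S 0 x A = (A ∩ S).indicator 1 x := by
  rw [enterDist, Measure.restrict_apply hA, Measure.dirac_apply' x (hA.inter hS)]

lemma measurable_enterDist (hg : Measurable g) (hS : MeasurableSet S) (t : ℕ) :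
    Measurable (enterDist g S t) := by
  induction t with
  | zero =>
    refine Measure.measurable_of_measurable_coe _ fun A hA => ?_
    simp_rw [enterDist_zero_apply hS _ hA]
    exact measurable_one.indicator (hA.inter hS)
  | succ n ih => exact ((Measure.measurable_bind' ih).comp hg).indicator hS.compl

lemma enterDist_succ_apply (hg : Measurable g) (hS : MeasurableSet S) (n : ℕ) (x : X)
    {A : Set X} (hA : MeasurableSet A) :
    enterDist g S (n + 1) x A =
      Sᶜ.indicator (fun x' => ∫⁻ z, enterDist g S n z A ∂g x') x := by
  by_cases hx : x ∈ S
  · simp [enterDist, hx]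
  · simp [enterDist, hx, Measure.bind_apply hA (measurable_enterDist hg hS n).aemeasurable]

lemma measurable_hitMeasure (hg : Measurable g) (hS : MeasurableSet S) :
    Measurable (hitMeasure g S) :=
  Measure.measurable_of_measurable_coe _ fun A hA => by
    simp_rw [hitMeasure, Measure.sum_apply _ hA]
    exact Measurable.tsum fun t =>
      (Measure.measurable_coe hA).comp (measurable_enterDist hg hS t)

lemma sum_enterDist_univ_le_one (hg : IsMarkov g) (hS : MeasurableSet S) (N : ℕ) (x : X) :
    ∑ t ∈ Finset.range N, enterDist g S t x univ ≤ 1 := by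
  induction N generalizing x with
  | zero => simp
  | succ N ih =>
    rw [Finset.sum_range_succ']
    simp only [enterDist_succ_apply hg.measurable hS _ _ .univ, enterDist_zero_apply hS _ .univ]
    by_cases hx : x ∈ S
    · simp [hx]
    · simp only [indicator_of_mem (mem_compl hx),
        indicator_of_notMem (show x ∉ univ ∩ S from fun h => hx h.2), add_zero]
      rw [← lintegral_finsetSum (f := fun t z => enterDist g S t z univ) _ fun t _ =>
        (Measure.measurable_coe .univ).comp (measurable_enterDist hg.measurable hS t)]
      calc ∫⁻ z, ∑ t ∈ Finset.range N, enterDist g S t z univ ∂g x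
          ≤ ∫⁻ _, 1 ∂g x := lintegral_mono ih
        _ = 1 := by simp [(hg.1 x).measure_univ]

lemma hitMeasure_univ_le_one (hg : IsMarkov g) (hS : MeasurableSet S) (x : X) :
    hitMeasure g S x univ ≤ 1 := by
  rw [hitMeasure, Measure.sum_apply _ .univ]
  exact ENNReal.tsum_le_of_sum_range_le (sum_enterDist_univ_le_one hg hS · x)

lemma measurable_traceSub (hg : Measurable g) (hS : MeasurableSet S) :
    Measurable (traceSub g S) := by
  have hK : Measurable (traceK g S) :=
    (Measure.measurable_bind' (measurable_hitMeasure hg hS)).comp hg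
  refine Measure.measurable_of_measurable_coe _ fun B hB => ?_
  simp_rw [traceSub, (MeasurableEmbedding.subtype_coe hS).comap_apply]
  exact (Measure.measurable_coe ((MeasurableEmbedding.subtype_coe hS).measurableSet_image' hB)).comp
    (hK.comp measurable_subtype_coe)

lemma traceSub_univ_le_one (hg : IsMarkov g) (hS : MeasurableSet S) (w : S) :
    traceSub g S w univ ≤ 1 := by
  rw [traceSub, (MeasurableEmbedding.subtype_coe hS).comap_apply, traceK]
  refine (measure_mono (subset_univ _)).trans ?_
  rw [Measure.bind_apply .univ (measurable_hitMeasure hg.measurable hS).aemeasurable]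
  calc ∫⁻ z, hitMeasure g S z univ ∂g w ≤ ∫⁻ _, 1 ∂g w :=
        lintegral_mono (hitMeasure_univ_le_one hg hS)
    _ = 1 := by simp [(hg.1 w).measure_univ]

lemma apply_le_traceK (hg : Measurable g) (hS : MeasurableSet S) (x : X) {B : Set X}
    (hB : MeasurableSet B) (hBS : B ⊆ S) : g x B ≤ traceK g S x B := by
  rw [traceK, Measure.bind_apply hB (measurable_hitMeasure hg hS).aemeasurable,
    ← lintegral_indicator_one hB]
  refine lintegral_mono fun z => ?_
  calc B.indicator 1 z = enterDist g S 0 z B := by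
        rw [enterDist_zero_apply hS z hB, inter_eq_left.2 hBS]
    _ ≤ hitMeasure g S z B := Measure.le_sum (fun t => enterDist g S t z) 0 B

lemma measurable_killed (hg : Measurable g) (hS : MeasurableSet S) : Measurable (killed g S) :=
  Measure.measurable_of_measurable_coe _ fun A hA => by
    simp_rw [killed, Measure.restrict_apply hA]
    exact (Measure.measurable_coe (hA.inter hS)).comp hg

lemma killed_le_map_traceSub (hg : Measurable g) (hS : MeasurableSet S) (w : S) :
    killed g S w ≤ (traceSub g S w).map Subtype.val := by
  rw [traceSub, (MeasurableEmbedding.subtype_coe hS).map_comap, Subtype.range_coe]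
  refine Measure.le_iff.2 fun A hA => ?_
  rw [killed, Measure.restrict_apply hA, Measure.restrict_apply hA]
  exact apply_le_traceK hg hS w (hA.inter hS) inter_subset_right

lemma iterK_killed_le (hg : Measurable g) (hS : MeasurableSet S) (t : ℕ) (x : X) :
    iterK (killed g S) t x ≤ iterK g t x :=
  iterK_mono (measurable_killed hg hS) hg (fun _ => Measure.restrict_le_self) t x

lemma iterK_killed_le_map_traceSub (hg : IsMarkov g) (hS : MeasurableSet S) (t : ℕ) (w : S) :
    iterK (killed g S) t w ≤ (iterK (traceSub g S) t w).map Subtype.val :=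
  iterK_le_map_iterK (measurable_killed hg.measurable hS) (measurable_traceSub hg.measurable hS)
    measurable_subtype_coe (killed_le_map_traceSub hg.measurable hS) t w

lemma one_le_iterK_killed_univ_add (hg : IsMarkov g) (hS : MeasurableSet S) (t : ℕ) (x : X) :
    1 ≤ iterK (killed g S) t x univ + ∑ s ∈ Finset.range (t + 1), iterK g s x Sᶜ := by
  have hK := measurable_killed hg.measurable hS
  induction t with
  | zero => simp [iterK]
  | succ n ih =>
    set ρ := iterK (killed g S) n x
    have hstep : ρ univ ≤ iterK (killed g S) (n + 1) x univ + iterK g (n + 1) x Sᶜ := by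
      rw [iterK_succ' hK, iterK_succ' hg.measurable, Measure.bind_apply .univ hK.aemeasurable,
        Measure.bind_apply hS.compl hg.measurable.aemeasurable]
      calc ρ univ = ∫⁻ z, (killed g S z univ + g z Sᶜ) ∂ρ := by
            simp [killed, measure_add_measure_compl hS, (hg.1 _).measure_univ]
        _ = ∫⁻ z, killed g S z univ ∂ρ + ∫⁻ z, g z Sᶜ ∂ρ :=
            lintegral_add_right _ ((Measure.measurable_coe hS.compl).comp hg.measurable)
        _ ≤ _ := add_le_add_right
            (lintegral_mono' (iterK_killed_le hg.measurable hS n x) le_rfl) _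
    calc 1 ≤ ρ univ + ∑ s ∈ Finset.range (n + 1), iterK g s x Sᶜ := ih
      _ ≤ iterK (killed g S) (n + 1) x univ + iterK g (n + 1) x Sᶜ +
            ∑ s ∈ Finset.range (n + 1), iterK g s x Sᶜ := by gcongr
      _ = _ := by rw [Finset.sum_range_succ _ (n + 1)]; ring

lemma iterK_apply_le_traceSub_add (hg : IsMarkov g) (hS : MeasurableSet S) (t : ℕ) (w : S)
    {A : Set X} (hA : MeasurableSet A) :
    iterK g t w A ≤ iterK (traceSub g S) t w (Subtype.val ⁻¹' A) +
      ∑ s ∈ Finset.range (t + 1), iterK g s w Sᶜ := by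
  have := isProbabilityMeasure_iterK hg t w
  calc iterK g t w A
        ≤ iterK (killed g S) t w A + ∑ s ∈ Finset.range (t + 1), iterK g s w Sᶜ :=
        apply_le_add_of_le_of_univ_le (iterK_killed_le hg.measurable hS t w)
          (by simpa using one_le_iterK_killed_univ_add hg hS t w) hA
    _ ≤ _ := by
        grw [iterK_killed_le_map_traceSub hg hS t w A, Measure.map_apply measurable_subtype_coe hA]

lemma traceSub_apply_le_iterK_add (hg : IsMarkov g) (hS : MeasurableSet S) (t : ℕ) (w : S)
    {A : Set X} (hA : MeasurableSet A) :
    iterK (traceSub g S) t w (Subtype.val ⁻¹' A) ≤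
      iterK g t w A + ∑ s ∈ Finset.range (t + 1), iterK g s w Sᶜ := by
  have hT : (iterK (traceSub g S) t w).map Subtype.val univ ≤ 1 := by
    rw [Measure.map_apply measurable_subtype_coe .univ]
    exact iterK_apply_univ_le_one (measurable_traceSub hg.measurable hS)
      (traceSub_univ_le_one hg hS) t w
  have : IsFiniteMeasure ((iterK (traceSub g S) t w).map Subtype.val) :=
    ⟨hT.trans_lt ENNReal.one_lt_top⟩
  rw [← Measure.map_apply measurable_subtype_coe hA]
  calc _ ≤ iterK (killed g S) t w A + ∑ s ∈ Finset.range (t + 1), iterK g s w Sᶜ :=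
        apply_le_add_of_le_of_univ_le (iterK_killed_le_map_traceSub hg hS t w)
          (hT.trans (one_le_iterK_killed_univ_add hg hS t w)) hA
    _ ≤ _ := by grw [iterK_killed_le hg.measurable hS t w A]

lemma lt_dbar_traceSub (hg : IsMarkov g) (hS : MeasurableSet S) {x y : X} (hx : x ∈ S)
    (hy : y ∈ S) {A : Set X} (hA : MeasurableSet A) {t : ℕ} {ε : ℝ≥0∞}
    (h : iterK g t y A + ε +
      ∑ s ∈ Finset.range (t + 1), (iterK g s x Sᶜ + iterK g s y Sᶜ) < iterK g t x A) :
    ε < dbar (traceSub g S) t := by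
  set T : S → ℝ≥0∞ := fun w => iterK (traceSub g S) t w (Subtype.val ⁻¹' A)
  rw [Finset.sum_add_distrib] at h
  have hT : T ⟨y, hy⟩ + ε < T ⟨x, hx⟩ := by
    refine lt_of_add_lt_add_right (a := ∑ s ∈ Finset.range (t + 1), iterK g s x Sᶜ) ?_
    calc T ⟨y, hy⟩ + ε + ∑ s ∈ Finset.range (t + 1), iterK g s x Sᶜ
        ≤ iterK g t y A + ∑ s ∈ Finset.range (t + 1), iterK g s y Sᶜ + ε +
            ∑ s ∈ Finset.range (t + 1), iterK g s x Sᶜ := by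
          gcongr; exact traceSub_apply_le_iterK_add hg hS t ⟨y, hy⟩ hA
      _ < iterK g t x A := by convert h using 1; ring
      _ ≤ _ := iterK_apply_le_traceSub_add hg hS t ⟨x, hx⟩ hA
  calc ε < T ⟨x, hx⟩ - T ⟨y, hy⟩ := lt_tsub_iff_left.2 hT
    _ ≤ _ := sub_le_tv _ _ (measurable_subtype_coe hA)
    _ ≤ _ := tv_iterK_le_dbar t _ _

end Trace

section Compact

variable [TopologicalSpace X] [SigmaCompactSpace X]

lemma eventually_measure_compactCovering_pos (μ : Measure X) [NeZero μ] :
    ∀ᶠ m in atTop, 0 < μ (compactCovering X m) := by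
  have h := tendsto_measure_iUnion_atTop (μ := μ) (compactCovering_subset X)
  rw [iUnion_compactCovering] at h
  exact h.eventually_const_lt (Measure.measure_univ_pos.2 (NeZero.ne μ))

variable [T2Space X] [OpensMeasurableSpace X]

lemma eventually_measure_compl_compactCovering_lt (μ : Measure X) [IsFiniteMeasure μ]
    {c : ℝ≥0∞} (hc : 0 < c) : ∀ᶠ m in atTop, μ (compactCovering X m)ᶜ < c := by
  have h := tendsto_measure_iInter_atTop (μ := μ)
    (fun m => (isCompact_compactCovering X m).measurableSet.compl.nullMeasurableSet)
    (fun _ _ hab => compl_subset_compl.2 (compactCovering_subset X hab))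
    ⟨0, measure_ne_top μ _⟩
  rw [← compl_iUnion, iUnion_compactCovering, compl_univ, measure_empty] at h
  exact h.eventually_lt_const hc

lemma exists_isCompact_lt_dbar_traceSub {g : X → Measure X} (hg : IsMarkov g)
    (π : Measure X) [NeZero π] {ε : ℝ≥0∞} {n : ℕ} (h : ∀ t ≤ n, ε < dbar g t) :
    ∃ S : Set X, IsCompact S ∧ MeasurableSet S ∧ 0 < π S ∧
      ∀ t ≤ n, ε < dbar (traceSub g S) t := by
  choose x y A hA hgap using fun t : Fin (n + 1) =>
    exists_lt_of_lt_dbar (h t (Nat.lt_succ_iff.1 t.2))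
  have := isProbabilityMeasure_iterK hg
  let occ : Fin (n + 1) → Measure X := fun t =>
    ∑ s ∈ Finset.range (t + 1), (iterK g s (x t) + iterK g s (y t))
  obtain ⟨m, hocc, hπm⟩ := ((eventually_all.2 fun t =>
    eventually_measure_compl_compactCovering_lt (occ t) (tsub_pos_of_lt (hgap t))).and
    (eventually_measure_compactCovering_pos π)).exists
  set S := compactCovering X m ∪ ⋃ t, {x t, y t}
  have hSc : IsCompact S := (isCompact_compactCovering X m).union
    ((finite_iUnion fun t => (finite_singleton _).insert _).isCompact)
  refine ⟨S, hSc, hSc.measurableSet, hπm.trans_le (measure_mono subset_union_left),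
    fun t ht => ?_⟩
  let i : Fin (n + 1) := ⟨t, Nat.lt_succ_of_le ht⟩
  have hxS : x i ∈ S := subset_union_right (mem_iUnion.2 ⟨i, by simp⟩)
  have hyS : y i ∈ S := subset_union_right (mem_iUnion.2 ⟨i, by simp⟩)
  refine lt_dbar_traceSub hg hSc.measurableSet hxS hyS (hA i) (lt_tsub_iff_left.1 ?_)
  calc ∑ s ∈ Finset.range (t + 1), (iterK g s (x i) Sᶜ + iterK g s (y i) Sᶜ)
        = occ i Sᶜ := by simp [occ, i]
    _ ≤ occ i (compactCovering X m)ᶜ := measure_mono (compl_subset_compl.2 subset_union_left)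
    _ < _ := hocc i

end Compact

theorem stmt6_general {X : Type*} [MetricSpace X] [MeasurableSpace X] [BorelSpace X]
    [SigmaCompactSpace X] (g : X → Measure X) (π : Measure X)
    (hg : IsMarkov g) (hπ : IsProbabilityMeasure π) :
    stdMix g (1 / 4) ≤
      ⨆ (S : Set X) (_ : IsCompact S) (_ : MeasurableSet S) (_ : 0 < π S),
        stdMix (traceSub g S) (1 / 4) := by
  refine stdMix_le_of_forall fun n hn => ?_
  obtain ⟨S, hSc, hSm, hπS, hS⟩ := exists_isCompact_lt_dbar_traceSub hg π hn
  exact (add_one_le_stdMix hS).trans (le_iSup₂_of_le S hSc (le_iSup₂_of_le hSm hπS le_rfl))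

/-- the standardized mixing time is bounded by the supremum of the
standardized mixing times of the traces on compact sets of positive measure. -/
theorem stmt6 {X : Type*} [MetricSpace X] [MeasurableSpace X] [BorelSpace X]
    [SigmaCompactSpace X] (g : X → Measure X) (π : Measure X)
    (hg : IsMarkov g) (hπ : IsProbabilityMeasure π) (hstat : Stationary g π) :
    stdMix g (1 / 4) ≤
      ⨆ (S : Set X) (_ : IsCompact S) (_ : MeasurableSet S) (_ : 0 < π S),
        stdMix (traceSub g S) (1 / 4) :=
  stmt6_general g π hg hπ

end MixHit
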